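/- Let P be a symmetric positive definite n×n real matrix, R a symmetric positive definite m×m real matrix, H an m×n real matrix, and K* = P·Hᵀ·(H·P·Hᵀ + R)⁻¹ the Kalman gain. Let λ be a real number strictly smaller than every eigenvalue of P_{K*}. Then for every n×m real matrix K, |det(λ·I - P_{K*})| ≤ |det(λ·I - P_K)|, i.e. the absolute value of the characteristic polynomial of P_K evaluated at λ is minimized at K = K*. -/

import Mathlib

open Matrix

/-- The posterior covariance matrix `P_K = (I - K·H)·P·(I - K·H)ᵀ + K·R·Kᵀ`. -/
noncomputable def postCov {n m : ℕ} (P : Matrix (Fin n) (Fin n) ℝ)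
    (R : Matrix (Fin m) (Fin m) ℝ) (H : Matrix (Fin m) (Fin n) ℝ)
    (K : Matrix (Fin n) (Fin m) ℝ) : Matrix (Fin n) (Fin n) ℝ :=
  (1 - K * H) * P * (1 - K * H)ᵀ + K * R * Kᵀ

/-- The Kalman gain `K* = P·Hᵀ·(H·P·Hᵀ + R)⁻¹`. -/
noncomputable def kalmanGain {n m : ℕ} (P : Matrix (Fin n) (Fin n) ℝ)
    (R : Matrix (Fin m) (Fin m) ℝ) (H : Matrix (Fin m) (Fin n) ℝ) :
    Matrix (Fin n) (Fin m) ℝ :=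
  P * Hᵀ * (H * P * Hᵀ + R)⁻¹

/-!
Completing the square in `K` gives `P_K = P_{K*} + (K - K*) S (K - K*)ᵀ` with
`S = H P Hᵀ + R` positive definite, so `P_K - λ I` is `P_{K*} - λ I` plus a positive semidefinite
matrix. As `λ` lies below the spectrum of `P_{K*}`, the matrix `A = P_{K*} - λ I` is positive
definite, and adding a positive semidefinite `D` can only increase its determinant: with `B = √A`,
`det (A + D) = det A · det (1 + B⁻¹ D B⁻¹)` and the last factor is at least `1`.
-/

namespace Matrix

variable {n : Type*} [Fintype n] [DecidableEq n]

theorem abs_det_sub_comm {R : Type*} [CommRing R] [LinearOrder R] [IsStrictOrderedRing R]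
    (A B : Matrix n n R) : |(A - B).det| = |(B - A).det| := by
  rw [← neg_sub, det_neg, abs_mul, abs_pow, abs_neg, abs_one, one_pow, one_mul]

theorem IsHermitian.det_smul_one_sub {𝕜 : Type*} [RCLike 𝕜] {A : Matrix n n 𝕜}
    (hA : A.IsHermitian) (t : 𝕜) : (t • 1 - A).det = ∏ i, (t - hA.eigenvalues i) := by
  rw [smul_one_eq_diagonal, ← scalar_apply, ← eval_charpoly, hA.charpoly_eq, Polynomial.eval_prod]
  simp

theorem IsHermitian.det_sub_smul_one {𝕜 : Type*} [RCLike 𝕜] {A : Matrix n n 𝕜}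
    (hA : A.IsHermitian) (t : 𝕜) : (A - t • 1).det = ∏ i, (hA.eigenvalues i - t) := by
  rw [← neg_sub, det_neg, hA.det_smul_one_sub, ← Finset.card_univ, ← Finset.prod_neg]
  simp

theorem PosSemidef.one_le_det_one_add {E : Matrix n n ℝ} (hE : E.PosSemidef) :
    1 ≤ (1 + E).det := by
  rw [add_comm, ← sub_neg_eq_add, ← neg_one_smul ℝ (1 : Matrix n n ℝ), hE.1.det_sub_smul_one]
  refine Finset.one_le_prod fun i _ => ?_
  simp only [RCLike.ofReal_real_eq_id, id, sub_neg_eq_add]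
  linarith [hE.eigenvalues_nonneg i]

open scoped MatrixOrder in
theorem IsHermitian.posDef_sub_smul_one {A : Matrix n n ℝ} (hA : A.IsHermitian) {t : ℝ}
    (ht : ∀ i, t < hA.eigenvalues i) : (A - t • 1).PosDef := by
  rw [← Algebra.algebraMap_eq_smul_one, ← isStrictlyPositive_iff_posDef,
    StarOrderedRing.isStrictlyPositive_iff_spectrum_pos (R := ℝ) _
      (hA.isSelfAdjoint.sub (.algebraMap _ (.all t))),
    ← spectrum.sub_singleton_eq, hA.spectrum_real_eq_range_eigenvalues]
  rintro _ ⟨_, ⟨i, rfl⟩, _, rfl, rfl⟩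
  exact sub_pos.mpr (ht i)

open scoped MatrixOrder in
theorem PosDef.det_le_det_add {A D : Matrix n n ℝ} (hA : A.PosDef) (hD : D.PosSemidef) :
    A.det ≤ (A + D).det := by
  set B := CFC.sqrt A
  have hBB : B * B = A := CFC.sqrt_mul_sqrt_self A hA.posSemidef.nonneg
  have hB : IsUnit B.det :=
    (isUnit_iff_isUnit_det B).mp ((CFC.isUnit_sqrt_iff A hA.posSemidef.nonneg).mpr hA.isUnit)
  have hBt : B⁻¹ᵀ = B⁻¹ := by
    rw [transpose_nonsing_inv, ← conjTranspose_eq_transpose_of_trivial,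
      (CFC.sqrt_nonneg A).posSemidef.isHermitian.eq]
  have hE : (B⁻¹ * D * B⁻¹).PosSemidef := by
    simpa [hBt] using hD.mul_mul_conjTranspose_same B⁻¹
  have hsplit : A + D = B * (1 + B⁻¹ * D * B⁻¹) * B := by
    rw [Matrix.mul_add, Matrix.add_mul, mul_one, hBB, ← Matrix.mul_assoc, ← Matrix.mul_assoc,
      mul_nonsing_inv B hB, one_mul, Matrix.mul_assoc, nonsing_inv_mul B hB, mul_one]
  rw [hsplit, det_mul, det_mul, ← hBB, det_mul, mul_right_comm]
  exact le_mul_of_one_le_right (mul_self_nonneg _) hE.one_le_det_one_add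

end Matrix

section Kalman

variable {n m : ℕ} {P : Matrix (Fin n) (Fin n) ℝ} {R : Matrix (Fin m) (Fin m) ℝ}
  (H : Matrix (Fin m) (Fin n) ℝ)

theorem postCov_eq_sub_sub_add (K : Matrix (Fin n) (Fin m) ℝ) :
    postCov P R H K = P - K * (H * P) - P * Hᵀ * Kᵀ + K * (H * P * Hᵀ + R) * Kᵀ := by
  simp only [postCov, transpose_sub, transpose_mul, transpose_one, Matrix.sub_mul,
    Matrix.mul_sub, Matrix.mul_add, Matrix.add_mul, Matrix.one_mul, Matrix.mul_one,
    Matrix.mul_assoc]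
  abel

theorem postCov_eq_postCov_kalmanGain_add (hP : P.IsSymm) (hR : R.IsSymm)
    (hS : IsUnit (H * P * Hᵀ + R).det) (K : Matrix (Fin n) (Fin m) ℝ) :
    postCov P R H K = postCov P R H (kalmanGain P R H) +
      (K - kalmanGain P R H) * (H * P * Hᵀ + R) * (K - kalmanGain P R H)ᵀ := by
  have hSsymm : (H * P * Hᵀ + R).IsSymm := by
    rw [IsSymm, transpose_add, transpose_mul, transpose_mul, transpose_transpose, hP.eq, hR.eq,
      Matrix.mul_assoc]
  rw [postCov_eq_sub_sub_add, postCov_eq_sub_sub_add]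
  set S := H * P * Hᵀ + R
  have hGS : kalmanGain P R H * S = P * Hᵀ := by
    rw [kalmanGain, Matrix.mul_assoc, nonsing_inv_mul S hS, Matrix.mul_one]
  have hSG : S * (kalmanGain P R H)ᵀ = H * P := by
    rw [kalmanGain, transpose_mul, transpose_nonsing_inv, hSsymm.eq, ← Matrix.mul_assoc,
      mul_nonsing_inv S hS, Matrix.one_mul, transpose_mul, transpose_transpose, hP.eq]
  rw [← hGS, ← hSG]
  simp only [transpose_sub, Matrix.sub_mul, Matrix.mul_sub, Matrix.mul_assoc]
  abel

end Kalman

theorem abs_det_charpoly_postCov_kalmanGain_le {n m : ℕ} (P : Matrix (Fin n) (Fin n) ℝ)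
    (R : Matrix (Fin m) (Fin m) ℝ) (H : Matrix (Fin m) (Fin n) ℝ)
    (hP : P.PosDef) (hR : R.PosDef)
    (hstar : (postCov P R H (kalmanGain P R H)).IsHermitian)
    (lam : ℝ) (hlam : ∀ i, lam < hstar.eigenvalues i)
    (K : Matrix (Fin n) (Fin m) ℝ) :
    |(lam • (1 : Matrix (Fin n) (Fin n) ℝ) - postCov P R H (kalmanGain P R H)).det| ≤
      |(lam • (1 : Matrix (Fin n) (Fin n) ℝ) - postCov P R H K).det| := by
  have hS : (H * P * Hᵀ + R).PosDef := by
    have hHPH := hP.posSemidef.mul_mul_conjTranspose_same H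
    rw [conjTranspose_eq_transpose_of_trivial] at hHPH
    exact PosDef.posSemidef_add hHPH hR
  have hD := hS.posSemidef.mul_mul_conjTranspose_same (K - kalmanGain P R H)
  rw [conjTranspose_eq_transpose_of_trivial] at hD
  have hA := hstar.posDef_sub_smul_one hlam
  have hK := postCov_eq_postCov_kalmanGain_add H (isHermitian_iff_isSymm.mp hP.1)
    (isHermitian_iff_isSymm.mp hR.1) hS.det_pos.ne'.isUnit K
  rw [abs_det_sub_comm, abs_det_sub_comm _ (postCov P R H K), hK, add_sub_right_comm,
    abs_of_pos hA.det_pos, abs_of_pos (hA.add_posSemidef hD).det_pos]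
  exact hA.det_le_det_add hD
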